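/- For T ~ N(b̃, 1), λ ≥ 0 and b̃ ∈ ℝ, the risk of the soft-thresholding estimator satisfies E[(δ_{S,λ}(T) − b̃)²] = b̃²·(Φ(λ − b̃) − Φ(−λ − b̃)) + (1 + λ²)·(1 − Φ(λ − b̃) + Φ(−λ − b̃)) + ((λ − b̃)·φ(λ − b̃) + (λ + b̃)·φ(−λ − b̃)) − 2λ·(φ(λ − b̃) + φ(−λ − b̃)), where φ and Φ denote the standard normal density and cumulative distribution function. -/

import Mathlib

open MeasureTheory ProbabilityTheory
open scoped ENNReal

/-- The standard normal density `φ(x) = (2π)^{−1/2} exp(−x²/2)`. -/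
noncomputable def stdPhi (x : ℝ) : ℝ :=
  (Real.sqrt (2 * Real.pi))⁻¹ * Real.exp (-(x ^ 2) / 2)

/-- The standard normal cumulative distribution function `Φ(x) = ∫_{−∞}^x φ(u) du`. -/
noncomputable def stdCDF (x : ℝ) : ℝ :=
  ∫ u in Set.Iic x, stdPhi u

/-- Soft-thresholding estimator `δ_{S,λ}(t) = sign(t)·max{|t| − λ, 0}`. -/
noncomputable def softThresh (l t : ℝ) : ℝ := Real.sign t * max (|t| - l) 0

open Set Filter


lemma stdPhi_eq' (x : ℝ) :
    stdPhi x = (Real.sqrt (2 * Real.pi))⁻¹ * Real.exp (-(1/2) * x ^ 2) := by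
  rw [stdPhi]; congr 1; ring_nf

lemma continuous_stdPhi : Continuous stdPhi := by
  unfold stdPhi
  exact continuous_const.mul ((continuous_pow 2).neg.div_const 2).rexp

lemma integrable_stdPhi : Integrable stdPhi := by
  have h := (integrable_exp_neg_mul_sq (by norm_num : (0:ℝ) < 1/2)).const_mul
      ((Real.sqrt (2 * Real.pi))⁻¹)
  refine h.congr (Eventually.of_forall fun x => ?_)
  rw [stdPhi_eq']

lemma integrable_id_stdPhi : Integrable (fun x => x * stdPhi x) := by
  have h := (integrable_mul_exp_neg_mul_sq (by norm_num : (0:ℝ) < 1/2)).const_mul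
      ((Real.sqrt (2 * Real.pi))⁻¹)
  refine h.congr (Eventually.of_forall fun x => ?_)
  simp only [stdPhi_eq']; ring

lemma integrable_sq_stdPhi : Integrable (fun x => x ^ 2 * stdPhi x) := by
  have h := (integrable_rpow_mul_exp_neg_mul_sq (by norm_num : (0:ℝ) < 1/2)
      (by norm_num : (-1:ℝ) < 2)).const_mul ((Real.sqrt (2 * Real.pi))⁻¹)
  refine h.congr (Eventually.of_forall fun x => ?_)
  have : x ^ (2:ℝ) = x ^ 2 := by
    rw [show (2:ℝ) = ((2:ℕ):ℝ) by norm_num, Real.rpow_natCast]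
  simp only [this, stdPhi_eq']; ring

lemma integrable_sqm1_stdPhi : Integrable (fun x => (x ^ 2 - 1) * stdPhi x) := by
  have h := integrable_sq_stdPhi.sub integrable_stdPhi
  refine h.congr (Eventually.of_forall fun x => ?_)
  simp [sub_mul]

lemma hasDerivAt_stdPhi (x : ℝ) : HasDerivAt stdPhi (-x * stdPhi x) x := by
  have h1 : HasDerivAt (fun t : ℝ => -(t ^ 2) / 2) (-x) x := by
    have := ((hasDerivAt_pow 2 x).neg).div_const 2
    refine this.congr_deriv ?_
    norm_num; ring
  have h2 := (h1.exp).const_mul ((Real.sqrt (2 * Real.pi))⁻¹)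
  have : stdPhi = fun t : ℝ => (Real.sqrt (2 * Real.pi))⁻¹ * Real.exp (-(t ^ 2) / 2) := rfl
  rw [this]
  refine h2.congr_deriv ?_
  beta_reduce; ring

lemma tendsto_sq_atTop : Tendsto (fun x : ℝ => x ^ 2) atTop atTop := by
  exact tendsto_pow_atTop (by norm_num)

lemma tendsto_sq_atBot : Tendsto (fun x : ℝ => x ^ 2) atBot atTop := by
  have h0 : Tendsto (fun x : ℝ => x ^ 2) atTop atTop := tendsto_pow_atTop (by norm_num)
  have h := h0.comp (tendsto_abs_atBot_atTop (G := ℝ))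
  refine h.congr fun x => ?_
  simp [Function.comp, sq_abs]

lemma tendsto_exp_neg_const_mul_sq {c : ℝ} (hc : 0 < c) {F : Filter ℝ}
    (hF : Tendsto (fun x : ℝ => x ^ 2) F atTop) :
    Tendsto (fun x : ℝ => Real.exp (-c * x ^ 2)) F (nhds 0) := by
  refine Real.tendsto_exp_atBot.comp ?_
  have h1 : Tendsto (fun x : ℝ => c * x ^ 2) F atTop := hF.const_mul_atTop hc
  have h2 := tendsto_neg_atTop_atBot.comp h1
  refine h2.congr fun x => ?_
  simp [Function.comp]

lemma tendsto_stdPhi_atBot : Tendsto stdPhi atBot (nhds 0) := by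
  have h := (tendsto_exp_neg_const_mul_sq (by norm_num : (0:ℝ) < 1/2) tendsto_sq_atBot).const_mul
      ((Real.sqrt (2 * Real.pi))⁻¹)
  rw [mul_zero] at h
  refine h.congr fun x => ?_
  rw [← stdPhi_eq']

lemma tendsto_stdPhi_atTop : Tendsto stdPhi atTop (nhds 0) := by
  have h := (tendsto_exp_neg_const_mul_sq (by norm_num : (0:ℝ) < 1/2) tendsto_sq_atTop).const_mul
      ((Real.sqrt (2 * Real.pi))⁻¹)
  rw [mul_zero] at h
  refine h.congr fun x => ?_
  rw [← stdPhi_eq']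

lemma tendsto_id_stdPhi_atTop : Tendsto (fun x : ℝ => x * stdPhi x) atTop (nhds 0) := by
  have ho := (rpow_mul_exp_neg_mul_sq_isLittleO_exp_neg (by norm_num : (0:ℝ) < 1/2) 1).isBigO
  have hg : Tendsto (fun x : ℝ => Real.exp (-(1/2) * x)) atTop (nhds 0) := by
    refine Real.tendsto_exp_atBot.comp ?_
    have h1 : Tendsto (fun x : ℝ => (1/2 : ℝ) * x) atTop atTop :=
      (tendsto_id (α := ℝ)).const_mul_atTop (by norm_num)
    have h2 := tendsto_neg_atTop_atBot.comp h1
    refine h2.congr fun x => ?_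
    simp [Function.comp]
  have h := (ho.trans_tendsto hg).const_mul ((Real.sqrt (2 * Real.pi))⁻¹)
  rw [mul_zero] at h
  refine h.congr fun x => ?_
  rw [stdPhi_eq', Real.rpow_one]; ring

lemma tendsto_id_stdPhi_atBot : Tendsto (fun x : ℝ => x * stdPhi x) atBot (nhds 0) := by
  have h := tendsto_id_stdPhi_atTop.comp tendsto_neg_atBot_atTop
  have h2 : (fun x : ℝ => -(x * stdPhi x)) = (fun x : ℝ => x * stdPhi x) ∘ Neg.neg := by
    funext x
    simp only [Function.comp_apply, stdPhi, neg_sq]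
    ring
  rw [← h2] at h
  simpa using h.neg

lemma integral_Iic_id_stdPhi (a : ℝ) : ∫ x in Iic a, x * stdPhi x = -stdPhi a := by
  have h := integral_Iic_of_hasDerivAt_of_tendsto' (f := fun x => -stdPhi x)
    (f' := fun x => x * stdPhi x) (a := a) (m := 0)
    (fun x _ => (hasDerivAt_stdPhi x).neg.congr_deriv (by ring))
    integrable_id_stdPhi.integrableOn
    (by simpa using tendsto_stdPhi_atBot.neg)
  rw [h]; ring

lemma integral_Ioi_id_stdPhi (a : ℝ) : ∫ x in Ioi a, x * stdPhi x = stdPhi a := by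
  have h := integral_Ioi_of_hasDerivAt_of_tendsto' (f := fun x => -stdPhi x)
    (f' := fun x => x * stdPhi x) (a := a) (m := 0)
    (fun x _ => (hasDerivAt_stdPhi x).neg.congr_deriv (by ring))
    integrable_id_stdPhi.integrableOn
    (by simpa using tendsto_stdPhi_atTop.neg)
  rw [h]; ring

lemma hasDerivAt_neg_id_stdPhi (x : ℝ) :
    HasDerivAt (fun t : ℝ => -(t * stdPhi t)) ((x ^ 2 - 1) * stdPhi x) x := by
  have h := ((hasDerivAt_id x).mul (hasDerivAt_stdPhi x)).neg
  refine h.congr_deriv ?_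
  simp only [id_eq]
  ring

lemma integral_Iic_sqm1_stdPhi (a : ℝ) :
    ∫ x in Iic a, (x ^ 2 - 1) * stdPhi x = -a * stdPhi a := by
  have h := integral_Iic_of_hasDerivAt_of_tendsto' (f := fun t => -(t * stdPhi t))
    (f' := fun x => (x ^ 2 - 1) * stdPhi x) (a := a) (m := 0)
    (fun x _ => hasDerivAt_neg_id_stdPhi x)
    integrable_sqm1_stdPhi.integrableOn
    (by simpa using tendsto_id_stdPhi_atBot.neg)
  rw [h]; ring

lemma integral_Ioi_sqm1_stdPhi (a : ℝ) :
    ∫ x in Ioi a, (x ^ 2 - 1) * stdPhi x = a * stdPhi a := by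
  have h := integral_Ioi_of_hasDerivAt_of_tendsto' (f := fun t => -(t * stdPhi t))
    (f' := fun x => (x ^ 2 - 1) * stdPhi x) (a := a) (m := 0)
    (fun x _ => hasDerivAt_neg_id_stdPhi x)
    integrable_sqm1_stdPhi.integrableOn
    (by simpa using tendsto_id_stdPhi_atTop.neg)
  rw [h]; ring

lemma gaussianPDFReal_eq_stdPhi (b : ℝ) (x : ℝ) :
    gaussianPDFReal b 1 x = stdPhi (x - b) := by
  simp [gaussianPDFReal, stdPhi]

lemma integral_stdPhi : ∫ x, stdPhi x = 1 := by
  have h := integral_gaussianPDFReal_eq_one 0 (one_ne_zero)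
  rw [← h]
  refine integral_congr_ae (Eventually.of_forall fun x => ?_)
  rw [gaussianPDFReal_eq_stdPhi, sub_zero]

lemma integral_Ioi_stdPhi (a : ℝ) : ∫ x in Ioi a, stdPhi x = 1 - stdCDF a := by
  have h := intervalIntegral.integral_Iic_add_Ioi (b := a) (f := stdPhi) (μ := volume)
    integrable_stdPhi.integrableOn integrable_stdPhi.integrableOn
  rw [integral_stdPhi] at h
  have hc : stdCDF a = ∫ x in Iic a, stdPhi x := rfl
  linarith

lemma integral_Ioc_stdPhi {c a : ℝ} (h : c ≤ a) :
    ∫ x in Ioc c a, stdPhi x = stdCDF a - stdCDF c := by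
  have h2 := setIntegral_union (f := stdPhi) (μ := volume)
    (s := Iic c) (t := Ioc c a)
    (Iic_disjoint_Ioc (le_refl c)) measurableSet_Ioc
    integrable_stdPhi.integrableOn integrable_stdPhi.integrableOn
  rw [Iic_union_Ioc_eq_Iic h] at h2
  have hc : stdCDF a = ∫ x in Iic a, stdPhi x := rfl
  have hc2 : stdCDF c = ∫ x in Iic c, stdPhi x := rfl
  rw [hc, hc2, h2]; ring

lemma integrable_shift_stdPhi (r : ℝ) : Integrable (fun x => stdPhi x * (x + r) ^ 2) := by
  have h := (integrable_sqm1_stdPhi.add (integrable_id_stdPhi.const_mul (2 * r))).add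
    (integrable_stdPhi.const_mul (1 + r ^ 2))
  refine h.congr (Eventually.of_forall fun x => ?_)
  simp only [Pi.add_apply]
  ring

lemma integral_Iic_shift_stdPhi (r a : ℝ) :
    ∫ x in Iic a, stdPhi x * (x + r) ^ 2
      = -a * stdPhi a - 2 * r * stdPhi a + (1 + r ^ 2) * stdCDF a := by
  have he : ∀ x : ℝ, stdPhi x * (x + r) ^ 2
      = (x ^ 2 - 1) * stdPhi x + 2 * r * (x * stdPhi x) + (1 + r ^ 2) * stdPhi x := by
    intro x; ring
  rw [setIntegral_congr_fun measurableSet_Iic (fun x _ => he x)]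
  have hA : IntegrableOn (fun x : ℝ => (x ^ 2 - 1) * stdPhi x) (Iic a) :=
    integrable_sqm1_stdPhi.integrableOn
  have hB : IntegrableOn (fun x : ℝ => 2 * r * (x * stdPhi x)) (Iic a) :=
    (integrable_id_stdPhi.const_mul (2 * r)).integrableOn
  have hC : IntegrableOn (fun x : ℝ => (1 + r ^ 2) * stdPhi x) (Iic a) :=
    (integrable_stdPhi.const_mul (1 + r ^ 2)).integrableOn
  have hAB : IntegrableOn
      (fun x : ℝ => (x ^ 2 - 1) * stdPhi x + 2 * r * (x * stdPhi x)) (Iic a) := hA.add hB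
  rw [integral_add hAB hC, integral_add hA hB,
    integral_const_mul, integral_const_mul,
    integral_Iic_sqm1_stdPhi, integral_Iic_id_stdPhi]
  have hc : stdCDF a = ∫ x in Iic a, stdPhi x := rfl
  rw [← hc]; ring

lemma integral_Ioi_shift_stdPhi (r a : ℝ) :
    ∫ x in Ioi a, stdPhi x * (x + r) ^ 2
      = a * stdPhi a + 2 * r * stdPhi a + (1 + r ^ 2) * (1 - stdCDF a) := by
  have he : ∀ x : ℝ, stdPhi x * (x + r) ^ 2
      = (x ^ 2 - 1) * stdPhi x + 2 * r * (x * stdPhi x) + (1 + r ^ 2) * stdPhi x := by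
    intro x; ring
  rw [setIntegral_congr_fun measurableSet_Ioi (fun x _ => he x)]
  have hA : IntegrableOn (fun x : ℝ => (x ^ 2 - 1) * stdPhi x) (Ioi a) :=
    integrable_sqm1_stdPhi.integrableOn
  have hB : IntegrableOn (fun x : ℝ => 2 * r * (x * stdPhi x)) (Ioi a) :=
    (integrable_id_stdPhi.const_mul (2 * r)).integrableOn
  have hC : IntegrableOn (fun x : ℝ => (1 + r ^ 2) * stdPhi x) (Ioi a) :=
    (integrable_stdPhi.const_mul (1 + r ^ 2)).integrableOn
  have hAB : IntegrableOn
      (fun x : ℝ => (x ^ 2 - 1) * stdPhi x + 2 * r * (x * stdPhi x)) (Ioi a) := hA.add hB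
  rw [integral_add hAB hC, integral_add hA hB,
    integral_const_mul, integral_const_mul,
    integral_Ioi_sqm1_stdPhi, integral_Ioi_id_stdPhi, integral_Ioi_stdPhi]

lemma softThresh_of_le_neg {l t : ℝ} (hl : 0 ≤ l) (ht : t ≤ -l) : softThresh l t = t + l := by
  rcases lt_or_eq_of_le (le_trans ht (by linarith) : t ≤ 0) with h | h
  · rw [softThresh, Real.sign_of_neg h, abs_of_neg h, max_eq_left (by linarith)]
    ring
  · have hl0 : l = 0 := le_antisymm (by linarith) hl
    subst h
    simp [softThresh, hl0]

lemma softThresh_of_abs_le {l t : ℝ} (ht : |t| ≤ l) : softThresh l t = 0 := by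
  rw [softThresh, max_eq_right (by linarith), mul_zero]

lemma softThresh_of_ge {l t : ℝ} (hl : 0 ≤ l) (ht : l ≤ t) : softThresh l t = t - l := by
  rcases lt_or_eq_of_le (le_trans hl ht : (0:ℝ) ≤ t) with h | h
  · rw [softThresh, Real.sign_of_pos h, abs_of_pos h, max_eq_left (by linarith)]
    ring
  · have hl0 : l = 0 := le_antisymm (h ▸ ht) hl
    rw [← h]
    simp [softThresh, hl0]


/-- **Closed form for the soft-thresholding risk.**  For `T ~ N(b̃, 1)` and `λ ≥ 0`,
`E[(δ_{S,λ}(T) − b̃)²] = b̃²·(Φ(λ−b̃) − Φ(−λ−b̃)) + (1+λ²)·(1 − Φ(λ−b̃) + Φ(−λ−b̃))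
  + ((λ−b̃)·φ(λ−b̃) + (λ+b̃)·φ(−λ−b̃)) − 2λ·(φ(λ−b̃) + φ(−λ−b̃))`. -/
theorem stmt_13 (l b : ℝ) (hl : 0 ≤ l) :
    (∫ t, (softThresh l t - b) ^ 2 ∂(gaussianReal b 1))
      = b ^ 2 * (stdCDF (l - b) - stdCDF (-l - b))
        + (1 + l ^ 2) * (1 - stdCDF (l - b) + stdCDF (-l - b))
        + ((l - b) * stdPhi (l - b) + (l + b) * stdPhi (-l - b))
        - 2 * l * (stdPhi (l - b) + stdPhi (-l - b)) := by
  have hmeas : Measurable (fun x => (gaussianPDFReal b 1 x).toNNReal) :=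
    (measurable_gaussianPDFReal b 1).real_toNNReal
  have hμ : gaussianReal b 1
      = volume.withDensity (fun x => ((gaussianPDFReal b 1 x).toNNReal : ℝ≥0∞)) := by
    rw [gaussianReal_of_var_ne_zero _ one_ne_zero]
    rfl
  rw [hμ, integral_withDensity_eq_integral_smul hmeas]
  have hpt : ∀ x : ℝ, (gaussianPDFReal b 1 x).toNNReal • (softThresh l x - b) ^ 2
      = stdPhi (x - b) * (softThresh l x - b) ^ 2 := by
    intro x
    rw [NNReal.smul_def, Real.coe_toNNReal _ (gaussianPDFReal_nonneg b 1 x),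
      gaussianPDFReal_eq_stdPhi, smul_eq_mul]
  simp only [hpt]
  rw [← integral_add_right_eq_self (fun x => stdPhi (x - b) * (softThresh l x - b) ^ 2) b]
  simp only [add_sub_cancel_right]
  have hca : (-l - b : ℝ) ≤ l - b := by linarith
  set g := fun u : ℝ => stdPhi u * (softThresh l (u + b) - b) ^ 2 with hg
  have hE1 : EqOn (fun u : ℝ => stdPhi u * (u + l) ^ 2) g (Iic (-l - b)) := by
    intro u hu
    have hu' : u + b ≤ -l := by have := mem_Iic.mp hu; linarith
    simp only [hg, softThresh_of_le_neg hl hu']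
    ring_nf
  have hE2 : EqOn (fun u : ℝ => stdPhi u * b ^ 2) g (Ioc (-l - b) (l - b)) := by
    intro u hu
    have h1 : -l < u + b := by have := hu.1; linarith
    have h2 : u + b ≤ l := by have := hu.2; linarith
    simp only [hg, softThresh_of_abs_le (abs_le.mpr ⟨h1.le, h2⟩)]
    ring_nf
  have hE3 : EqOn (fun u : ℝ => stdPhi u * (u + -l) ^ 2) g (Ioi (l - b)) := by
    intro u hu
    have hu' : l ≤ u + b := by have := mem_Ioi.mp hu; linarith
    simp only [hg, softThresh_of_ge hl hu']
    ring_nf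
  have hg1 : IntegrableOn g (Iic (-l - b)) :=
    ((integrable_shift_stdPhi l).integrableOn).congr_fun hE1 measurableSet_Iic
  have hg2 : IntegrableOn g (Ioc (-l - b) (l - b)) :=
    ((integrable_stdPhi.mul_const (b ^ 2)).integrableOn).congr_fun hE2 measurableSet_Ioc
  have hg3 : IntegrableOn g (Ioi (l - b)) :=
    ((integrable_shift_stdPhi (-l)).integrableOn).congr_fun hE3 measurableSet_Ioi
  have hg23 : IntegrableOn g (Ioi (-l - b)) := by
    rw [← Ioc_union_Ioi_eq_Ioi hca]
    exact hg2.union hg3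
  have hsplit1 : ∫ u, g u = (∫ u in Iic (-l - b), g u) + ∫ u in Ioi (-l - b), g u :=
    (intervalIntegral.integral_Iic_add_Ioi hg1 hg23).symm
  have hsplit2 : (∫ u in Ioi (-l - b), g u)
      = (∫ u in Ioc (-l - b) (l - b), g u) + ∫ u in Ioi (l - b), g u := by
    rw [← Ioc_union_Ioi_eq_Ioi hca]
    exact setIntegral_union (Ioc_disjoint_Ioi le_rfl) measurableSet_Ioi hg2 hg3
  have hv1 : (∫ u in Iic (-l - b), g u)
      = -(-l - b) * stdPhi (-l - b) - 2 * l * stdPhi (-l - b)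
        + (1 + l ^ 2) * stdCDF (-l - b) := by
    rw [← setIntegral_congr_fun measurableSet_Iic hE1, integral_Iic_shift_stdPhi]
  have hv2 : (∫ u in Ioc (-l - b) (l - b), g u)
      = b ^ 2 * (stdCDF (l - b) - stdCDF (-l - b)) := by
    rw [← setIntegral_congr_fun measurableSet_Ioc hE2, integral_mul_const,
      integral_Ioc_stdPhi hca]
    ring
  have hv3 : (∫ u in Ioi (l - b), g u)
      = (l - b) * stdPhi (l - b) + 2 * (-l) * stdPhi (l - b)
        + (1 + (-l) ^ 2) * (1 - stdCDF (l - b)) := by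
    rw [← setIntegral_congr_fun measurableSet_Ioi hE3, integral_Ioi_shift_stdPhi]
  rw [hsplit1, hsplit2, hv1, hv2, hv3]
  ring
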